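/- arXiv:1711.03515 — 2 statements merged into one kernel-verified Lean document; each statement's English description precedes it below -/
import Mathlib

section
/- Extend π = θ^μ to a ring automorphism of S = M[x;θ] acting coefficientwise, with fixed ring R = L[x;σ]. For every nonzero f ∈ S, let f̄ be the monic generator of the left ideal Sf ∩ R of R. Then: (i) S·f̄ is the largest π-invariant left ideal of S contained in Sf; (ii) S·f̄ = ⋂_{i=0}^{s−1} S·f^{π^i}, where f^{π^i} denotes π^i applied coefficientwise to f; consequently (iii) f̄ = lclm(f, f^π, …, f^{π^{s−1}}). -/
/-! Skew polynomials over a field `M` twisted by a ring automorphism `θ` (`x·a = θ(a)·x`),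
modeled as finitely supported functions `ℕ →₀ M` (coefficient of `xⁱ` at `i`),
with left-coefficient multiplication `(Σᵢ aᵢ xⁱ)·(Σⱼ bⱼ xʲ) = Σᵢⱼ aᵢ θⁱ(bⱼ) x^{i+j}`. -/

variable {M : Type*} [Field M]

/-- Multiplication of skew polynomials: `f * g` in `M[x;θ]`. -/
noncomputable def sMul (θ : M ≃+* M) (f g : ℕ →₀ M) : ℕ →₀ M :=
  f.sum fun i a => g.sum fun j b => Finsupp.single (i + j) (a * (θ ^ i) b)

/-- The skew polynomial `x - γ`. -/
noncomputable def Xsub (γ : M) : ℕ →₀ M := Finsupp.single 1 1 - Finsupp.single 0 γ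

/-- The skew polynomial `xⁿ - 1`. -/
noncomputable def XnSubOne (n : ℕ) : ℕ →₀ M := Finsupp.single n 1 - Finsupp.single 0 1

/-- The left ideal `S·f = {q·f : q ∈ S}` of `S = M[x;θ]`. -/
def lIdeal (θ : M ≃+* M) (f : ℕ →₀ M) : Set (ℕ →₀ M) := {h | ∃ q, h = sMul θ q f}

/-- `g` right-divides `f` in `M[x;θ]`, i.e. `f ∈ S·g`. -/
def rdvd (θ : M ≃+* M) (g f : ℕ →₀ M) : Prop := f ∈ lIdeal θ g

/-- The fixed subfield of an automorphism. -/
noncomputable def fixedSubfield (φ : M ≃+* M) : Subfield M where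
  carrier := {a | φ a = a}
  zero_mem' := map_zero φ
  one_mem' := map_one φ
  add_mem' := by intro a b ha hb; simp only [Set.mem_setOf_eq, map_add] at *; rw [ha, hb]
  mul_mem' := by intro a b ha hb; simp only [Set.mem_setOf_eq, map_mul] at *; rw [ha, hb]
  neg_mem' := by intro a ha; simp only [Set.mem_setOf_eq, map_neg] at *; rw [ha]
  inv_mem' := by intro a ha; simp only [Set.mem_setOf_eq, map_inv₀] at *; rw [ha]

/-- A skew polynomial lies in the subring `R` of polynomials whose coefficients are fixed
by the automorphism `φ` (for `φ = θ^μ = π`, this is `R = L[x;σ]` with `L = M^π`). -/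
def inR (φ : M ≃+* M) (f : ℕ →₀ M) : Prop := ∀ j, φ (f j) = f j

/-- The polynomial of degree `< n` with coefficient vector `c`. -/
noncomputable def vecPoly {n : ℕ} (c : Fin n → M) : ℕ →₀ M :=
  ∑ j : Fin n, Finsupp.single (j : ℕ) (c j)

/-- Hamming weight of a vector. -/
noncomputable def hWt {n : ℕ} (c : Fin n → M) : ℕ := Set.ncard {j : Fin n | c j ≠ 0}

/-- `α` generates a normal basis `{α, θ(α), …, θ^{n-1}(α)}` of `M` over `K = M^θ`. -/
def NormalBasis (θ : M ≃+* M) (n : ℕ) (α : M) : Prop :=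
  LinearIndependent (fixedSubfield θ) (fun i : Fin n => (θ ^ (i : ℕ)) α) ∧
    Submodule.span (fixedSubfield θ) (Set.range fun i : Fin n => (θ ^ (i : ℕ)) α) = ⊤

/-- `f` is monic of degree `d`. -/
def IsMonicAt (f : ℕ →₀ M) (d : ℕ) : Prop := f d = 1 ∧ ∀ j, d < j → f j = 0

/-- `f` is monic. -/
def IsMonic (f : ℕ →₀ M) : Prop := ∃ d, IsMonicAt f d

/-- Coefficientwise application of an automorphism to a skew polynomial (`f ↦ f^φ`). -/
noncomputable def pmap (φ : M ≃+* M) (f : ℕ →₀ M) : ℕ →₀ M :=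
  Finsupp.mapRange φ (map_zero φ) f

/-- A subset of `M[x;θ]` is a left ideal. -/
def IsLeftIdeal (θ : M ≃+* M) (J : Set (ℕ →₀ M)) : Prop :=
  (0 : ℕ →₀ M) ∈ J ∧ (∀ a ∈ J, ∀ b ∈ J, a + b ∈ J) ∧
    ∀ q : ℕ →₀ M, ∀ h ∈ J, sMul θ q h ∈ J

/-!
A `π`-invariant left ideal `J ⊆ S·f` is generated by a unique monic polynomial `g`; since `g^π`
is again a monic element of `J` of the same degree, `g^π = g`, so `g ∈ S·f ∩ R ⊆ S·f̄`. As
`π^s = 1` and `π` commutes with `θ`, the intersection `⋂_{i<s} S·f^{πⁱ}` is such an ideal,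
whence it lies in `S·f̄`; conversely `f̄ = f̄^{πⁱ} ∈ S·f^{πⁱ}`. Monic generators of equal left
ideals coincide, which gives the `lclm` description.
-/

section SkewPolynomial

variable {θ : M ≃+* M}

lemma zero_sMul (f : ℕ →₀ M) : sMul θ 0 f = 0 := by
  simp [sMul]

lemma sMul_zero (q : ℕ →₀ M) : sMul θ q 0 = 0 := by
  simp [sMul]

lemma add_sMul (q r f : ℕ →₀ M) : sMul θ (q + r) f = sMul θ q f + sMul θ r f :=
  Finsupp.sum_add_index' (by simp) (by simp [add_mul, Finsupp.sum_add])

lemma sMul_add (q f g : ℕ →₀ M) : sMul θ q (f + g) = sMul θ q f + sMul θ q g := by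
  simp only [sMul, ← Finsupp.sum_add]
  refine Finsupp.sum_congr fun i _ => Finsupp.sum_add_index' (by simp) ?_
  simp [mul_add]

lemma single_sMul_single (i j : ℕ) (a b : M) :
    sMul θ (Finsupp.single i a) (Finsupp.single j b) =
      Finsupp.single (i + j) (a * (θ ^ i) b) := by
  simp [sMul]

lemma sMul_assoc (a b c : ℕ →₀ M) : sMul θ (sMul θ a b) c = sMul θ a (sMul θ b c) := by
  induction a using Finsupp.induction_linear with
  | zero => simp [zero_sMul]
  | add a a' ha ha' => simp [add_sMul, ha, ha']
  | single i x =>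
  induction b using Finsupp.induction_linear with
  | zero => simp [zero_sMul, sMul_zero]
  | add b b' hb hb' => simp [add_sMul, sMul_add, hb, hb']
  | single j y =>
  induction c using Finsupp.induction_linear with
  | zero => simp [sMul_zero]
  | add c c' hc hc' => simp [sMul_add, hc, hc']
  | single k z =>
    simp only [single_sMul_single, map_mul, pow_add, RingAut.mul_apply, add_assoc, mul_assoc]

lemma single_zero_sMul (c : M) (f : ℕ →₀ M) : sMul θ (Finsupp.single 0 c) f = c • f := by
  induction f using Finsupp.induction_linear with
  | zero => simp [sMul_zero]
  | add f g hf hg => rw [sMul_add, hf, hg, smul_add]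
  | single j b => simp [single_sMul_single]

lemma one_sMul (f : ℕ →₀ M) : sMul θ (Finsupp.single 0 1) f = f := by
  rw [single_zero_sMul, one_smul]

lemma sMul_apply (q f : ℕ →₀ M) (k : ℕ) :
    sMul θ q f k =
      ∑ i ∈ q.support, ∑ j ∈ f.support, if i + j = k then q i * (θ ^ i) (f j) else 0 := by
  simp only [sMul, Finsupp.sum, Finsupp.finsetSum_apply, Finsupp.single_apply]

lemma single_sMul_apply_add (e : ℕ) (c : M) (g : ℕ →₀ M) (k : ℕ) :
    sMul θ (Finsupp.single e c) g (e + k) = c * (θ ^ e) (g k) := by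
  induction g using Finsupp.induction_linear with
  | zero => simp [sMul_zero]
  | add g g' hg hg' => simp [sMul_add, hg, hg', mul_add]
  | single j b => by_cases hjk : j = k <;> simp [single_sMul_single, hjk]

end SkewPolynomial

section Degree

/-- Junk value: `deg 0 = 0`. -/
def deg (f : ℕ →₀ M) : ℕ := f.support.sup id

lemma le_deg_of_ne_zero {f : ℕ →₀ M} {i : ℕ} (hi : f i ≠ 0) : i ≤ deg f :=
  Finset.le_sup (f := id) (Finsupp.mem_support_iff.2 hi)

lemma apply_eq_zero_of_deg_lt {f : ℕ →₀ M} {i : ℕ} (hi : deg f < i) : f i = 0 := by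
  by_contra h
  exact (le_deg_of_ne_zero h).not_gt hi

lemma apply_deg_ne_zero {f : ℕ →₀ M} (hf : f ≠ 0) : f (deg f) ≠ 0 := by
  obtain ⟨i, hi, hdeg⟩ := Finset.exists_mem_eq_sup _ (Finsupp.support_nonempty_iff.2 hf) id
  rw [deg, hdeg]
  exact Finsupp.mem_support_iff.1 hi

lemma deg_eq_of_apply {f : ℕ →₀ M} {d : ℕ} (hd : f d ≠ 0) (hgt : ∀ j, d < j → f j = 0) :
    deg f = d := by
  refine le_antisymm ?_ (le_deg_of_ne_zero hd)
  by_contra! h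
  exact apply_deg_ne_zero (f := f) (by rintro rfl; exact hd rfl) (hgt _ h)

lemma IsMonicAt.ne_zero {f : ℕ →₀ M} {d : ℕ} (h : IsMonicAt f d) : f ≠ 0 := by
  rintro rfl
  exact zero_ne_one h.1

lemma IsMonicAt.deg_eq {f : ℕ →₀ M} {d : ℕ} (h : IsMonicAt f d) : deg f = d :=
  deg_eq_of_apply (by rw [h.1]; exact one_ne_zero) h.2

variable {θ : M ≃+* M}

lemma sMul_apply_eq_zero_of_deg_add_lt (q f : ℕ →₀ M) {k : ℕ} (hk : deg q + deg f < k) :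
    sMul θ q f k = 0 := by
  rw [sMul_apply]
  refine Finset.sum_eq_zero fun i hi => Finset.sum_eq_zero fun j hj => if_neg ?_
  have := le_deg_of_ne_zero (Finsupp.mem_support_iff.1 hi)
  have := le_deg_of_ne_zero (Finsupp.mem_support_iff.1 hj)
  omega

lemma sMul_apply_deg_add (q f : ℕ →₀ M) :
    sMul θ q f (deg q + deg f) = q (deg q) * (θ ^ deg q) (f (deg f)) := by
  rw [sMul_apply, Finset.sum_eq_single (deg q), Finset.sum_eq_single (deg f), if_pos rfl]
  · intro j hj hne
    have := le_deg_of_ne_zero (Finsupp.mem_support_iff.1 hj)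
    exact if_neg (by omega)
  · intro hf
    rw [Finsupp.notMem_support_iff.1 hf]
    simp
  · intro i hi hne
    refine Finset.sum_eq_zero fun j hj => if_neg ?_
    have := le_deg_of_ne_zero (Finsupp.mem_support_iff.1 hi)
    have := le_deg_of_ne_zero (Finsupp.mem_support_iff.1 hj)
    omega
  · intro hq
    simp [Finsupp.notMem_support_iff.1 hq]

lemma deg_sMul {q f : ℕ →₀ M} (hq : q ≠ 0) (hf : f ≠ 0) :
    deg (sMul θ q f) = deg q + deg f := by
  refine deg_eq_of_apply ?_ fun j hj => sMul_apply_eq_zero_of_deg_add_lt q f hj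
  rw [sMul_apply_deg_add]
  exact mul_ne_zero (apply_deg_ne_zero hq) ((map_ne_zero _).2 (apply_deg_ne_zero hf))

end Degree

section LeftIdeal

variable {θ : M ≃+* M}

lemma self_mem_lIdeal (f : ℕ →₀ M) : f ∈ lIdeal θ f :=
  ⟨Finsupp.single 0 1, (one_sMul f).symm⟩

lemma isLeftIdeal_lIdeal (f : ℕ →₀ M) : IsLeftIdeal θ (lIdeal θ f) :=
  ⟨⟨0, (zero_sMul f).symm⟩,
    by rintro _ ⟨q, rfl⟩ _ ⟨r, rfl⟩; exact ⟨q + r, (add_sMul q r f).symm⟩,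
    by rintro q _ ⟨r, rfl⟩; exact ⟨sMul θ q r, (sMul_assoc q r f).symm⟩⟩

lemma lIdeal_subset_of_mem {f g : ℕ →₀ M} (hg : g ∈ lIdeal θ f) : lIdeal θ g ⊆ lIdeal θ f := by
  rintro _ ⟨q, rfl⟩
  exact (isLeftIdeal_lIdeal f).2.2 q g hg

lemma IsLeftIdeal.sub_mem {J : Set (ℕ →₀ M)} (hJ : IsLeftIdeal θ J) {a b : ℕ →₀ M}
    (ha : a ∈ J) (hb : b ∈ J) : a - b ∈ J := by
  have hnegb := hJ.2.2 (Finsupp.single 0 (-1)) b hb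
  rw [single_zero_sMul, neg_one_smul] at hnegb
  simpa [sub_eq_add_neg] using hJ.2.1 a ha _ hnegb

lemma IsLeftIdeal.iInter {ι : Sort*} {J : ι → Set (ℕ →₀ M)} (hJ : ∀ i, IsLeftIdeal θ (J i)) :
    IsLeftIdeal θ (⋂ i, J i) := by
  simp only [IsLeftIdeal, Set.mem_iInter]
  exact ⟨fun i => (hJ i).1, fun a ha b hb i => (hJ i).2.1 a (ha i) b (hb i),
    fun q h hh i => (hJ i).2.2 q h (hh i)⟩

lemma deg_le_deg_of_mem_lIdeal {f h : ℕ →₀ M} (hf : f ≠ 0) (hh : h ∈ lIdeal θ f) (h0 : h ≠ 0) :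
    deg f ≤ deg h := by
  obtain ⟨q, rfl⟩ := hh
  have hq : q ≠ 0 := by rintro rfl; exact h0 (zero_sMul f)
  rw [deg_sMul hq hf]
  omega

lemma IsMonicAt.eq_of_mem_lIdeal {g h : ℕ →₀ M} {d : ℕ} (hg : IsMonicAt g d)
    (hh : IsMonicAt h d) (hmem : h ∈ lIdeal θ g) : h = g := by
  by_contra hne
  have hr : ∀ j, d ≤ j → (h - g) j = 0 := fun j hj => by
    rcases hj.eq_or_lt with rfl | hj
    · rw [Finsupp.sub_apply, hh.1, hg.1, sub_self]
    · rw [Finsupp.sub_apply, hh.2 j hj, hg.2 j hj, sub_self]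
  have hle := deg_le_deg_of_mem_lIdeal hg.ne_zero
    ((isLeftIdeal_lIdeal g).sub_mem hmem (self_mem_lIdeal g)) (sub_ne_zero.2 hne)
  exact apply_deg_ne_zero (sub_ne_zero.2 hne) (hr _ (hg.deg_eq ▸ hle))

lemma eq_of_lIdeal_eq {g h : ℕ →₀ M} (hg : IsMonic g) (hh : IsMonic h)
    (heq : lIdeal θ h = lIdeal θ g) : h = g := by
  obtain ⟨d, hg⟩ := hg
  obtain ⟨e, hh⟩ := hh
  have hhg : h ∈ lIdeal θ g := heq ▸ self_mem_lIdeal h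
  have hgh : g ∈ lIdeal θ h := heq ▸ self_mem_lIdeal g
  have hde : d = e := by
    have := deg_le_deg_of_mem_lIdeal hg.ne_zero hhg hh.ne_zero
    have := deg_le_deg_of_mem_lIdeal hh.ne_zero hgh hg.ne_zero
    rw [hg.deg_eq, hh.deg_eq] at *
    omega
  subst hde
  exact hg.eq_of_mem_lIdeal hh hhg

lemma IsMonicAt.exists_sub_sMul_apply_eq_zero {g : ℕ →₀ M} {d : ℕ} (hg : IsMonicAt g d)
    (h : ℕ →₀ M) : ∃ q, ∀ j, d ≤ j → (h - sMul θ q g) j = 0 := by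
  suffices ∀ N h, (∀ j, N ≤ j → h j = 0) → ∃ q, ∀ j, d ≤ j → (h - sMul θ q g) j = 0 from
    this _ h fun j hj => apply_eq_zero_of_deg_lt hj
  intro N
  induction N with
  | zero => exact fun h hh => ⟨0, fun j _ => by rw [zero_sMul, sub_zero]; exact hh j j.zero_le⟩
  | succ N ih =>
    intro h hh
    rcases lt_or_ge N d with hNd | hdN
    · exact ⟨0, fun j hj => by rw [zero_sMul, sub_zero]; exact hh j (by omega)⟩
    -- subtracting `h N · x^(N-d) · g` kills the coefficient of `x^N`
    obtain ⟨q, hq⟩ := ih (h - sMul θ (Finsupp.single (N - d) (h N)) g) fun j hj => by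
      obtain ⟨k, rfl⟩ : ∃ k, j = N - d + k := ⟨j - (N - d), by omega⟩
      rw [Finsupp.sub_apply, single_sMul_apply_add]
      rcases (show d ≤ k by omega).eq_or_lt with rfl | hdk
      · rw [hg.1, map_one, mul_one, Nat.sub_add_cancel hdN, sub_self]
      · rw [hh _ (by omega), hg.2 k hdk, map_zero, mul_zero, sub_zero]
    refine ⟨Finsupp.single (N - d) (h N) + q, fun j hj => ?_⟩
    rw [add_sMul, ← sub_sub]
    exact hq j hj

lemma IsLeftIdeal.exists_monic_generator {J : Set (ℕ →₀ M)} (hJ : IsLeftIdeal θ J)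
    (hne : ∃ h ∈ J, h ≠ 0) : ∃ g d, IsMonicAt g d ∧ J = lIdeal θ g := by
  obtain ⟨h₀, ⟨hh₀J, hh₀⟩, hmin⟩ :=
    (InvImage.wf deg wellFounded_lt).has_min {h | h ∈ J ∧ h ≠ 0} hne
  set g := sMul θ (Finsupp.single 0 (h₀ (deg h₀))⁻¹) h₀
  have hgJ : g ∈ J := hJ.2.2 _ _ hh₀J
  have hg : IsMonicAt g (deg h₀) := by
    simp only [g, single_zero_sMul]
    exact ⟨inv_mul_cancel₀ (apply_deg_ne_zero hh₀),
      fun j hj => by simp [apply_eq_zero_of_deg_lt hj]⟩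
  refine ⟨g, deg h₀, hg, subset_antisymm (fun h hh => ?_) ?_⟩
  · obtain ⟨q, hq⟩ := hg.exists_sub_sMul_apply_eq_zero h
    -- a nonzero remainder in `J` would have degree below the minimal one
    refine ⟨q, sub_eq_zero.1 (by_contra fun hr => ?_)⟩
    refine hmin _ ⟨hJ.sub_mem hh (hJ.2.2 q g hgJ), hr⟩ (not_le.1 fun hle => ?_)
    exact apply_deg_ne_zero hr (hq _ hle)
  · rintro _ ⟨q, rfl⟩
    exact hJ.2.2 q g hgJ

end LeftIdeal

section CoefficientwiseAction

variable {θ φ : M ≃+* M}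

lemma pmap_apply (φ : M ≃+* M) (f : ℕ →₀ M) (k : ℕ) : pmap φ f k = φ (f k) :=
  Finsupp.mapRange_apply

lemma pmap_zero (φ : M ≃+* M) : pmap φ 0 = 0 :=
  Finsupp.mapRange_zero

lemma pmap_add (φ : M ≃+* M) (f g : ℕ →₀ M) : pmap φ (f + g) = pmap φ f + pmap φ g :=
  Finsupp.mapRange_add' f g

lemma pmap_single (φ : M ≃+* M) (i : ℕ) (a : M) :
    pmap φ (Finsupp.single i a) = Finsupp.single i (φ a) :=
  Finsupp.mapRange_single

lemma pmap_eq_self_iff {f : ℕ →₀ M} : pmap φ f = f ↔ inR φ f := by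
  simp [Finsupp.ext_iff, pmap_apply, inR]

lemma pmap_pmap (φ ψ : M ≃+* M) (f : ℕ →₀ M) : pmap φ (pmap ψ f) = pmap (φ * ψ) f := by
  ext k
  simp [pmap_apply]

lemma pmap_one (f : ℕ →₀ M) : pmap 1 f = f := by
  ext k
  simp [pmap_apply]

lemma pmap_pow_eq_self {f : ℕ →₀ M} (hf : pmap φ f = f) (i : ℕ) : pmap (φ ^ i) f = f := by
  induction i with
  | zero => exact pmap_one f
  | succ i ih => rw [pow_succ, ← pmap_pmap, hf, ih]

lemma IsMonicAt.pmap {f : ℕ →₀ M} {d : ℕ} (hf : IsMonicAt f d) : IsMonicAt (pmap φ f) d :=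
  ⟨by rw [pmap_apply, hf.1, map_one], fun j hj => by rw [pmap_apply, hf.2 j hj, map_zero]⟩

lemma pmap_sMul (hc : Commute φ θ) (q f : ℕ →₀ M) :
    pmap φ (sMul θ q f) = sMul θ (pmap φ q) (pmap φ f) := by
  induction q using Finsupp.induction_linear with
  | zero => simp [zero_sMul, pmap_zero]
  | add q q' hq hq' => rw [add_sMul, pmap_add, pmap_add, add_sMul, hq, hq']
  | single i a =>
  induction f using Finsupp.induction_linear with
  | zero => simp [sMul_zero, pmap_zero]
  | add f f' hf hf' => rw [sMul_add, pmap_add, pmap_add, sMul_add, hf, hf']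
  | single j b =>
    have hcomm : φ ((θ ^ i) b) = (θ ^ i) (φ b) := DFunLike.congr_fun (hc.pow_right i).eq b
    simp only [single_sMul_single, pmap_single, map_mul, hcomm]

lemma pmap_mem_lIdeal (hc : Commute φ θ) {g h : ℕ →₀ M} (hh : h ∈ lIdeal θ g) :
    pmap φ h ∈ lIdeal θ (pmap φ g) := by
  obtain ⟨q, rfl⟩ := hh
  exact ⟨pmap φ q, pmap_sMul hc q g⟩

lemma image_pmap_lIdeal_of_pmap_eq (hc : Commute φ θ) {g : ℕ →₀ M} (hg : pmap φ g = g) :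
    pmap φ '' lIdeal θ g = lIdeal θ g := by
  refine subset_antisymm (Set.image_subset_iff.2 fun h hh => hg ▸ pmap_mem_lIdeal hc hh)
    fun h hh => ⟨pmap φ⁻¹ h, ?_, by rw [pmap_pmap, mul_inv_cancel, pmap_one]⟩
  have hg' : pmap φ⁻¹ g = g := by
    conv_lhs => rw [← hg, pmap_pmap, inv_mul_cancel, pmap_one]
  exact hg' ▸ pmap_mem_lIdeal hc.inv_left hh

end CoefficientwiseAction

section InvariantIdeals

variable {θ φ : M ≃+* M}

lemma subset_lIdeal_of_mapsTo_pmap {f fbar : ℕ →₀ M}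
    (hR : ∀ g ∈ lIdeal θ f, inR φ g → g ∈ lIdeal θ fbar) {J : Set (ℕ →₀ M)}
    (hJ : IsLeftIdeal θ J) (hJφ : Set.MapsTo (pmap φ) J J) (hJf : J ⊆ lIdeal θ f) :
    J ⊆ lIdeal θ fbar := by
  by_cases hne : ∃ h ∈ J, h ≠ 0
  · obtain ⟨g, d, hg, rfl⟩ := hJ.exists_monic_generator hne
    have hgR : inR φ g := pmap_eq_self_iff.1 <|
      hg.eq_of_mem_lIdeal hg.pmap (hJφ (self_mem_lIdeal g))
    exact lIdeal_subset_of_mem (hR g (hJf (self_mem_lIdeal g)) hgR)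
  · push Not at hne
    intro h hh
    rw [hne h hh]
    exact (isLeftIdeal_lIdeal fbar).1

variable {s : ℕ} {f : ℕ →₀ M}

lemma mem_biInter_lIdeal_pmap_pow_iff (hφ : φ ^ s = 1) (hs : 0 < s) {h : ℕ →₀ M} :
    h ∈ ⋂ i ∈ Finset.range s, lIdeal θ (pmap (φ ^ i) f) ↔
      ∀ j, h ∈ lIdeal θ (pmap (φ ^ j) f) := by
  simp only [Set.mem_iInter, Finset.mem_range]
  refine ⟨fun hh j => ?_, fun hh i _ => hh i⟩
  rw [pow_eq_pow_mod j hφ]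
  exact hh _ (Nat.mod_lt j hs)

lemma mapsTo_pmap_biInter_lIdeal (hc : Commute φ θ) (hφ : φ ^ s = 1) (hs : 0 < s) :
    Set.MapsTo (pmap φ) (⋂ i ∈ Finset.range s, lIdeal θ (pmap (φ ^ i) f))
      (⋂ i ∈ Finset.range s, lIdeal θ (pmap (φ ^ i) f)) := by
  intro h hh
  rw [mem_biInter_lIdeal_pmap_pow_iff hφ hs] at hh ⊢
  intro j
  have := pmap_mem_lIdeal hc (hh (j + s - 1))
  rwa [pmap_pmap, ← pow_succ', Nat.sub_add_cancel (by omega), pow_add, hφ, mul_one] at this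

lemma biInter_lIdeal_subset (hs : 0 < s) :
    ⋂ i ∈ Finset.range s, lIdeal θ (pmap (φ ^ i) f) ⊆ lIdeal θ f :=
  fun h hh => by simpa [pmap_one] using Set.mem_iInter₂.1 hh 0 (Finset.mem_range.2 hs)

lemma lIdeal_subset_biInter (hc : Commute φ θ) {fbar : ℕ →₀ M} (hfbar : fbar ∈ lIdeal θ f)
    (hfix : pmap φ fbar = fbar) :
    lIdeal θ fbar ⊆ ⋂ i ∈ Finset.range s, lIdeal θ (pmap (φ ^ i) f) := by
  simp only [Set.subset_iInter_iff]
  intro i _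
  refine lIdeal_subset_of_mem ?_
  simpa [pmap_pow_eq_self hfix i] using pmap_mem_lIdeal (hc.pow_left i) hfbar

end InvariantIdeals

theorem pseudo_bound_lclm_general {M : Type*} [Field M] (θ : M ≃+* M) (μ s n : ℕ)
    (hs : 0 < s) (hn : n = μ * s) (hord : orderOf θ = n)
    (f : ℕ →₀ M)
    (fbar : ℕ →₀ M) (hfbarM : IsMonic fbar)
    (hfbargen : {h | ∃ q, inR (θ ^ μ) q ∧ h = sMul θ q fbar}
      = lIdeal θ f ∩ {h | inR (θ ^ μ) h}) :
    (pmap (θ ^ μ) '' lIdeal θ fbar = lIdeal θ fbar ∧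
      lIdeal θ fbar ⊆ lIdeal θ f ∧
      ∀ J : Set (ℕ →₀ M), IsLeftIdeal θ J → pmap (θ ^ μ) '' J = J →
        J ⊆ lIdeal θ f → J ⊆ lIdeal θ fbar) ∧
    (lIdeal θ fbar = ⋂ i ∈ Finset.range s, lIdeal θ (pmap ((θ ^ μ) ^ i) f)) ∧
    (∀ h : ℕ →₀ M, IsMonic h →
      lIdeal θ h = ⋂ i ∈ Finset.range s, lIdeal θ (pmap ((θ ^ μ) ^ i) f) → h = fbar) := by
  have hc : Commute (θ ^ μ) θ := (Commute.refl θ).pow_left μ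
  have hπs : (θ ^ μ) ^ s = 1 := by rw [← pow_mul, ← hn, ← hord, pow_orderOf_eq_one]
  obtain ⟨hfbar, hfbarR⟩ : fbar ∈ lIdeal θ f ∩ {h | inR (θ ^ μ) h} :=
    hfbargen ▸ ⟨Finsupp.single 0 1, pmap_eq_self_iff.1 (by simp [pmap_single]),
      (one_sMul fbar).symm⟩
  have hR : ∀ g ∈ lIdeal θ f, inR (θ ^ μ) g → g ∈ lIdeal θ fbar := fun g hg hgR => by
    obtain ⟨q, -, rfl⟩ : g ∈ {h | ∃ q, inR (θ ^ μ) q ∧ h = sMul θ q fbar} := hfbargen ▸ ⟨hg, hgR⟩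
    exact ⟨q, rfl⟩
  have hfix : pmap (θ ^ μ) fbar = fbar := pmap_eq_self_iff.2 hfbarR
  have hmax : ∀ J, IsLeftIdeal θ J → pmap (θ ^ μ) '' J = J → J ⊆ lIdeal θ f →
      J ⊆ lIdeal θ fbar := fun J hJ hJπ =>
    subset_lIdeal_of_mapsTo_pmap hR hJ ((Set.mapsTo_image _ _).mono_right hJπ.subset)
  have hinter : lIdeal θ fbar = ⋂ i ∈ Finset.range s, lIdeal θ (pmap ((θ ^ μ) ^ i) f) :=
    subset_antisymm (lIdeal_subset_biInter hc hfbar hfix) <|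
      subset_lIdeal_of_mapsTo_pmap hR
        (IsLeftIdeal.iInter fun _ => IsLeftIdeal.iInter fun _ => isLeftIdeal_lIdeal _)
        (mapsTo_pmap_biInter_lIdeal hc hπs hs) (biInter_lIdeal_subset hs)
  exact ⟨⟨image_pmap_lIdeal_of_pmap_eq hc hfix, lIdeal_subset_of_mem hfbar, hmax⟩, hinter,
    fun h hh heq => eq_of_lIdeal_eq hfbarM hh (heq.trans hinter.symm)⟩

/-- Setting: `θ` of order `n = μ·s`, `π = θ^μ` extended coefficientwise to
`S = M[x;θ]` with fixed ring `R = L[x;σ]`. For `0 ≠ f ∈ S`, let `f̄` be the monic generator of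
the left ideal `S·f ∩ R` of `R`. Then: (i) `S·f̄` is the largest `π`-invariant left ideal of `S`
contained in `S·f`; (ii) `S·f̄ = ⋂_{i=0}^{s-1} S·f^{πⁱ}`; and consequently (iii)
`f̄ = lclm(f, f^π, …, f^{π^{s-1}})`, i.e. `f̄` is the unique monic polynomial generating
`⋂_{i=0}^{s-1} S·f^{πⁱ}`. -/
theorem pseudo_bound_lclm {M : Type*} [Field M] (θ : M ≃+* M) (μ s n : ℕ)
    (hμ : 0 < μ) (hs : 0 < s) (hn : n = μ * s) (hord : orderOf θ = n)
    (f : ℕ →₀ M) (hf : f ≠ 0)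
    (fbar : ℕ →₀ M) (hfbarR : inR (θ ^ μ) fbar) (hfbarM : IsMonic fbar)
    (hfbargen : {h | ∃ q, inR (θ ^ μ) q ∧ h = sMul θ q fbar}
      = lIdeal θ f ∩ {h | inR (θ ^ μ) h}) :
    (pmap (θ ^ μ) '' lIdeal θ fbar = lIdeal θ fbar ∧
      lIdeal θ fbar ⊆ lIdeal θ f ∧
      ∀ J : Set (ℕ →₀ M), IsLeftIdeal θ J → pmap (θ ^ μ) '' J = J →
        J ⊆ lIdeal θ f → J ⊆ lIdeal θ fbar) ∧
    (lIdeal θ fbar = ⋂ i ∈ Finset.range s, lIdeal θ (pmap ((θ ^ μ) ^ i) f)) ∧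
    (∀ h : ℕ →₀ M, IsMonic h →
      lIdeal θ h = ⋂ i ∈ Finset.range s, lIdeal θ (pmap ((θ ^ μ) ^ i) f) → h = fbar) :=
  pseudo_bound_lclm_general θ μ s n hs hn hord f fbar hfbarM hfbargen
end

section
/- Let 2 ≤ δ ≤ n − 1 and let t be a positive integer with gcd(t, n) = 1. Set g = lclm(x − θ^{it}(β) : 0 ≤ i ≤ δ−2) ∈ S = M[x;θ]. Then g right-divides x^n − 1, deg g = δ − 1, and the M-linear code D ⊆ M^n consisting of the coefficient vectors of the polynomials of degree < n right-divisible by g has dimension n − δ + 1 and minimum Hamming distance exactly δ; in particular, D is an MDS code. -/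
/-! Skew polynomials over a field `M` twisted by a ring automorphism `θ` (`x·a = θ(a)·x`),
modeled as finitely supported functions `ℕ →₀ M` (coefficient of `xⁱ` at `i`),
with left-coefficient multiplication `(Σᵢ aᵢ xⁱ)·(Σⱼ bⱼ xʲ) = Σᵢⱼ aᵢ θⁱ(bⱼ) x^{i+j}`. -/

variable {M : Type*} [Field M]

/-! By the skew remainder theorem, `f ∈ S (x - γ)` iff `∑ fᵢ Nᵢ(γ) = 0` with the norms
`Nᵢ(γ) = θ^{i-1}(γ) ⋯ θ(γ) γ`. For `γ = θ^{jt}(β)` the norms telescope to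
`θ^{jt}(α)⁻¹ θ^{i+jt}(α)`, so the code `D` is the kernel of the `(δ - 1) × n` Moore matrix
`(σ^j (θ^i α))` of `σ = θ^t`. As `gcd(t, n) = 1`, `σ` has the same fixed field `K` as `θ`, and the
`θ^i α` are `K`-independent, so by Moore's lemma any `δ - 1` columns of this matrix are
independent. Hence nonzero codewords have weight `≥ δ`, the Singleton bound and rank–nullity give
`dim D = n - δ + 1`, and a kernel vector supported on the first `δ` coordinates is a codeword of
weight `δ`. Comparing `deg g` with the degrees of such codewords gives `deg g = δ - 1`. -/

section SkewPolynomial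

open Finsupp

variable (θ : M ≃+* M)

lemma sMul_zero_left (g : ℕ →₀ M) : sMul θ 0 g = 0 := by
  simp [sMul]

lemma sMul_add_left (f₁ f₂ g : ℕ →₀ M) :
    sMul θ (f₁ + f₂) g = sMul θ f₁ g + sMul θ f₂ g :=
  sum_add_index' (fun _ => by simp) fun _ _ _ => by
    simp only [add_mul, single_add, sum_add]

lemma sMul_single_left (i : ℕ) (a : M) (g : ℕ →₀ M) :
    sMul θ (single i a) g = g.sum fun j b => single (i + j) (a * (θ ^ i) b) :=
  sum_single_index (by simp)

lemma sMul_single_Xsub (i : ℕ) (a γ : M) :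
    sMul θ (single i a) (Xsub γ) = single (i + 1) a - single i (a * (θ ^ i) γ) := by
  rw [sMul_single_left, Xsub, sum_sub_index (fun _ _ _ => by rw [map_sub, mul_sub, single_sub]),
    sum_single_index (by simp), sum_single_index (by simp)]
  simp

lemma rdvd_refl (g : ℕ →₀ M) : rdvd θ g g :=
  ⟨single 0 1, by rw [sMul_single_left]; simp⟩

lemma sMul_apply_add {q g : ℕ →₀ M} {e d : ℕ} (hq : ∀ i, e < i → q i = 0)
    (hg : ∀ j, d < j → g j = 0) : sMul θ q g (e + d) = q e * (θ ^ e) (g d) := by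
  simp only [sMul, Finsupp.sum_apply]
  rw [sum_eq_single e _ (by simp), sum_eq_single d _ (by simp), single_eq_same]
  · intro j _ hj
    exact single_eq_of_ne' (by have := hg j; omega)
  · intro i hi hie
    have hie : i < e := lt_of_le_of_ne (not_lt.1 (mt (hq i) hi)) hie
    refine Finset.sum_eq_zero fun j hj => single_eq_of_ne' ?_
    have := not_lt.1 (mt (hg j) (mem_support_iff.1 hj))
    omega

/-- The norms `Nᵢ(γ)`, so that `xⁱ ≡ Nᵢ(γ)` modulo `S (x - γ)`. -/
noncomputable def skewNorm (γ : M) : ℕ → M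
  | 0 => 1
  | i + 1 => (θ ^ i) γ * skewNorm γ i

lemma linearCombination_sMul_Xsub (γ : M) (q : ℕ →₀ M) :
    linearCombination M (skewNorm θ γ) (sMul θ q (Xsub γ)) = 0 := by
  induction q using Finsupp.induction with
  | zero => simp [sMul_zero_left]
  | single_add i a q _ _ ih =>
    rw [sMul_add_left, map_add, ih, add_zero, sMul_single_Xsub, map_sub,
      linearCombination_single, linearCombination_single, skewNorm, smul_eq_mul, smul_eq_mul,
      ← mul_assoc, sub_self]

lemma exists_eq_sMul_Xsub_add (γ : M) (f : ℕ →₀ M) :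
    ∃ q, f = sMul θ q (Xsub γ) + single 0 (linearCombination M (skewNorm θ γ) f) := by
  induction f using Finsupp.induction_linear with
  | zero => exact ⟨0, by simp [sMul_zero_left]⟩
  | add f₁ f₂ h₁ h₂ =>
    obtain ⟨⟨q₁, hq₁⟩, ⟨q₂, hq₂⟩⟩ := And.intro h₁ h₂
    refine ⟨q₁ + q₂, ?_⟩
    rw [sMul_add_left, map_add, single_add]
    conv_lhs => rw [hq₁, hq₂]
    abel
  | single i a =>
    induction i generalizing a with
    | zero => exact ⟨0, by simp [sMul_zero_left, skewNorm]⟩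
    | succ i ih =>
      obtain ⟨q, hq⟩ := ih (a * (θ ^ i) γ)
      have hnorm : linearCombination M (skewNorm θ γ) (single (i + 1) a) =
          linearCombination M (skewNorm θ γ) (single i (a * (θ ^ i) γ)) := by
        rw [linearCombination_single, linearCombination_single, skewNorm, smul_eq_mul,
          smul_eq_mul, mul_assoc]
      refine ⟨single i a + q, ?_⟩
      rw [hnorm, sMul_add_left, sMul_single_Xsub, add_assoc, ← hq, sub_add_cancel]

lemma mem_lIdeal_Xsub_iff (γ : M) (f : ℕ →₀ M) :
    f ∈ lIdeal θ (Xsub γ) ↔ linearCombination M (skewNorm θ γ) f = 0 := by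
  refine ⟨?_, fun hf => ?_⟩
  · rintro ⟨q, rfl⟩
    exact linearCombination_sMul_Xsub θ γ q
  · obtain ⟨q, hq⟩ := exists_eq_sMul_Xsub_add θ γ f
    exact ⟨q, by rwa [hf, single_zero, add_zero] at hq⟩

end SkewPolynomial

section NormalBasis

open Finsupp

variable (θ : M ≃+* M)

lemma pow_apply_comm (i j : ℕ) (a : M) : (θ ^ i) ((θ ^ j) a) = (θ ^ j) ((θ ^ i) a) := by
  rw [← RingAut.mul_apply, ← RingAut.mul_apply, ← pow_add, ← pow_add, add_comm]

lemma skewNorm_inv_mul_self {a : M} (ha : a ≠ 0) (i : ℕ) :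
    skewNorm θ (a⁻¹ * θ a) i = a⁻¹ * (θ ^ i) a := by
  induction i with
  | zero => simp [skewNorm, ha]
  | succ i ih =>
    have hi : (θ ^ i) a ≠ 0 := map_ne_zero_iff _ (θ ^ i).injective |>.2 ha
    rw [skewNorm, ih, map_mul, map_inv₀, ← RingAut.mul_apply, ← pow_succ, pow_succ',
      RingAut.mul_apply]
    field_simp

lemma mem_lIdeal_Xsub_inv_mul_self_iff {a : M} (ha : a ≠ 0) (f : ℕ →₀ M) :
    f ∈ lIdeal θ (Xsub (a⁻¹ * θ a)) ↔ linearCombination M (fun i => (θ ^ i) a) f = 0 := by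
  have hnorm : linearCombination M (skewNorm θ (a⁻¹ * θ a)) f =
      a⁻¹ * linearCombination M (fun i => (θ ^ i) a) f := by
    simp only [linearCombination_apply, skewNorm_inv_mul_self θ ha, smul_eq_mul, mul_sum]
    exact sum_congr fun _ _ => mul_left_comm _ _ _
  rw [mem_lIdeal_Xsub_iff, hnorm, mul_eq_zero, inv_eq_zero, or_iff_right ha]

lemma pow_apply_inv_mul_self (k : ℕ) (a : M) :
    (θ ^ k) (a⁻¹ * θ a) = ((θ ^ k) a)⁻¹ * θ ((θ ^ k) a) := by
  rw [map_mul, map_inv₀, ← RingAut.mul_apply, ← RingAut.mul_apply, pow_mul_comm']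

lemma pow_apply_eq_self {σ : M ≃+* M} {a : M} (h : σ a = a) (k : ℕ) : (σ ^ k) a = a := by
  rw [RingAut.coe_pow]
  exact Function.iterate_fixed h k

lemma fixedSubfield_pow_of_coprime {t : ℕ} (ht : t.Coprime (orderOf θ)) :
    fixedSubfield (θ ^ t) = fixedSubfield θ := by
  ext a
  refine ⟨fun h => ?_, fun h => pow_apply_eq_self h t⟩
  obtain ⟨m, hm⟩ := exists_pow_eq_self_of_coprime ht
  change θ a = a
  rw [← hm]
  exact pow_apply_eq_self h m

end NormalBasis

section Moore

variable {ι : Type*} {σ : M ≃+* M} {v : ι → M}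

lemma LinearIndependent.eq_zero_of_sum_fixed_mul (hv : LinearIndependent (fixedSubfield σ) v)
    {s : Finset ι} {u : ι → M} (hu : ∀ i ∈ s, σ (u i) = u i) (h : ∑ i ∈ s, u i * v i = 0) :
    ∀ i ∈ s, u i = 0 := by
  classical
  let u' : ι → fixedSubfield σ := fun i => if hi : σ (u i) = u i then ⟨u i, hi⟩ else 0
  have hu' : ∀ i ∈ s, (u' i : M) = u i := fun i hi => by simp [u', hu i hi]
  have h' : ∑ i ∈ s, u' i • v i = 0 := by
    rw [← h]
    exact Finset.sum_congr rfl fun i hi => by rw [Subfield.smul_def, smul_eq_mul, hu' i hi]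
  intro i hi
  rw [← hu' i hi, linearIndependent_iff'.1 hv s u' h' i hi, ZeroMemClass.coe_zero]

/-- Moore's lemma. -/
lemma LinearIndependent.eq_zero_of_sum_mul_pow_apply (hv : LinearIndependent (fixedSubfield σ) v)
    (s : Finset ι) (c : ι → M) (hc : ∀ j < s.card, ∑ i ∈ s, c i * (σ ^ j) (v i) = 0) :
    ∀ i ∈ s, c i = 0 := by
  classical
  induction s using Finset.strongInduction generalizing c with | H s ih => ?_
  by_contra! ⟨i₀, hi₀, hc₀⟩
  set u : ι → M := fun i => c i * (c i₀)⁻¹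
  have hu₀ : u i₀ = 1 := mul_inv_cancel₀ hc₀
  have hu : ∀ j < s.card, ∑ i ∈ s, u i * (σ ^ j) (v i) = 0 := fun j hj => by
    simp only [u, mul_right_comm _ (c i₀)⁻¹, ← Finset.sum_mul, hc j hj, zero_mul]
  -- `u - σ⁻¹ u` solves the system with one row fewer and vanishes at `i₀`
  have hfix : ∀ i ∈ s, σ (u i) = u i := by
    have hdiff := ih (s.erase i₀) (Finset.erase_ssubset hi₀) (fun i => u i - σ.symm (u i))
      fun j hj => by
        rw [Finset.card_erase_of_mem hi₀] at hj
        rw [Finset.sum_erase s (by rw [hu₀, map_one, sub_self, zero_mul])]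
        have hshift := congrArg σ.symm (hu (j + 1) (by omega))
        simp only [map_sum, map_mul, map_zero, pow_succ', RingAut.mul_apply,
          RingEquiv.symm_apply_apply] at hshift
        simp only [sub_mul, Finset.sum_sub_distrib, hu j (by omega), hshift, sub_zero]
    intro i hi
    by_cases hii : i = i₀
    · rw [hii, hu₀, map_one]
    · have := sub_eq_zero.1 (hdiff i (Finset.mem_erase.2 ⟨hii, hi⟩))
      exact (congrArg σ this).trans (σ.apply_symm_apply _)
  have h₀ := hv.eq_zero_of_sum_fixed_mul hfix (by simpa using hu 0 (Finset.card_pos.2 ⟨i₀, hi₀⟩))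
  exact one_ne_zero (hu₀ ▸ h₀ i₀ hi₀)

end Moore

section Code

open Finset

variable {n : ℕ}

lemma vecPoly_apply (c : Fin n → M) (k : ℕ) :
    vecPoly c k = if h : k < n then c ⟨k, h⟩ else 0 := by
  simp only [vecPoly, Finsupp.finsetSum_apply, Finsupp.single_apply]
  split_ifs with h
  · rw [Finset.sum_eq_single ⟨k, h⟩ (fun j _ hj => if_neg fun e => hj (Fin.ext e)) (by simp)]
    simp
  · exact Finset.sum_eq_zero fun j _ => if_neg fun e : (j : ℕ) = k => h (e ▸ j.isLt)

lemma vecPoly_restrict {f : ℕ →₀ M} (hf : ∀ k, n ≤ k → f k = 0) :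
    vecPoly (fun i : Fin n => f i) = f := by
  ext k
  rw [vecPoly_apply]
  split_ifs with h
  · rfl
  · exact (hf k (not_lt.1 h)).symm

lemma linearCombination_vecPoly (v : ℕ → M) (c : Fin n → M) :
    Finsupp.linearCombination M v (vecPoly c) = ∑ i, c i * v i := by
  simp [vecPoly]

lemma hWt_le_card {c : Fin n → M} (s : Finset (Fin n)) (hc : ∀ j ∉ s, c j = 0) :
    hWt c ≤ #s :=
  (Set.ncard_coe_finset s) ▸ Set.ncard_le_ncard fun j hj => by_contra fun hjs => hj (hc j hjs)

lemma hWt_le_of_forall_le {c : Fin n → M} {k : ℕ} (hc : ∀ j : Fin n, k ≤ j → c j = 0) :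
    hWt c ≤ k :=
  (hWt_le_card {j | (j : ℕ) < k} fun j hj => hc j (by simpa using hj)).trans
    (Fin.card_filter_val_lt.trans_le (min_le_right _ _))

/-- Singleton bound: projecting onto the coordinates in `s` is injective on `D`. -/
lemma finrank_le_card_of_card_compl_lt_hWt (D : Submodule M (Fin n → M)) (s : Finset (Fin n))
    (hD : ∀ c ∈ D, c ≠ 0 → #sᶜ < hWt c) : Module.finrank M D ≤ #s := by
  let proj := LinearMap.funLeft M M (Subtype.val : s → Fin n) ∘ₗ D.subtype
  have hinj : Function.Injective proj := by
    refine (injective_iff_map_eq_zero proj).2 fun c hc => ?_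
    by_contra hc0
    refine (hD c c.2 (by simpa using hc0)).not_ge (hWt_le_card _ fun j hj => ?_)
    simpa [proj] using congrFun hc ⟨j, by simpa using hj⟩
  simpa using LinearMap.finrank_le_finrank_of_injective hinj

end Code

section MooreCode

open Finset Matrix

variable {n : ℕ}

def mooreMatrix {ι : Type*} (σ : M ≃+* M) (m : ℕ) (v : ι → M) : Matrix (Fin m) ι M :=
  Matrix.of fun j i => (σ ^ (j : ℕ)) (v i)

lemma mooreMatrix_mulVec_apply {ι : Type*} [Fintype ι] (σ : M ≃+* M) (m : ℕ) (v c : ι → M)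
    (j : Fin m) : (mooreMatrix σ m v *ᵥ c) j = ∑ i, c i * (σ ^ (j : ℕ)) (v i) := by
  simp [mooreMatrix, Matrix.mulVec, dotProduct, mul_comm]

lemma LinearIndependent.eq_zero_of_mooreMatrix_mulVec {σ : M ≃+* M} {m : ℕ} {v : Fin n → M}
    (hv : LinearIndependent (fixedSubfield σ) v) {c : Fin n → M}
    (hc : mooreMatrix σ m v *ᵥ c = 0) (hwt : hWt c ≤ m) : c = 0 := by
  let s := (Set.toFinite {j | c j ≠ 0}).toFinset
  have hs : #s = hWt c := (Set.ncard_eq_toFinset_card _ _).symm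
  funext i
  by_cases hi : i ∈ s
  · refine hv.eq_zero_of_sum_mul_pow_apply s c (fun j hj => ?_) i hi
    have hrow := congrFun hc ⟨j, by omega⟩
    rw [mooreMatrix_mulVec_apply, ← sum_subset (subset_univ s) fun k _ hk => ?_] at hrow
    · exact hrow
    · rw [show c k = 0 by simpa [s] using hk, zero_mul]
  · simpa [s] using hi

variable {r : ℕ} (H : Matrix (Fin r) (Fin n) M)

lemma finrank_ker_mulVecLin (hr : r ≤ n) (hH : ∀ c, H *ᵥ c = 0 → hWt c ≤ r → c = 0) :
    Module.finrank M (LinearMap.ker H.mulVecLin) = n - r := by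
  have hrank := LinearMap.finrank_range_add_finrank_ker H.mulVecLin
  have hrange := Submodule.finrank_le (LinearMap.range H.mulVecLin)
  simp only [Module.finrank_fin_fun] at hrank hrange
  have hsingleton := finrank_le_card_of_card_compl_lt_hWt (LinearMap.ker H.mulVecLin)
    {j | (j : ℕ) < n - r} fun c hc hc0 => by
      rw [card_compl, Fin.card_filter_val_lt, Fintype.card_fin]
      by_contra! hwt
      exact hc0 (hH c hc (by omega))
  rw [Fin.card_filter_val_lt] at hsingleton
  omega

lemma exists_mulVec_eq_zero_of_lt (hr : r < n) :
    ∃ c : Fin n → M, c ≠ 0 ∧ H *ᵥ c = 0 ∧ ∀ j : Fin n, r < j → c j = 0 := by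
  let ext := Function.ExtendByZero.linearMap M (Fin.castLE (hr : r + 1 ≤ n))
  have hext : ∀ d, ∀ i : Fin (r + 1), ext d (Fin.castLE hr i) = d i := fun d i =>
    (Fin.castLE_injective _).extend_apply _ _ _
  have hninj : ¬ Function.Injective (H.mulVecLin ∘ₗ ext) := fun hinj => by
    simpa using LinearMap.finrank_le_finrank_of_injective hinj
  obtain ⟨d, hd, hd0⟩ : ∃ d, H *ᵥ ext d = 0 ∧ d ≠ 0 := by
    rw [injective_iff_map_eq_zero] at hninj
    push Not at hninj
    exact hninj
  refine ⟨ext d, fun h => hd0 (funext fun i => ?_), hd, fun j hj => ?_⟩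
  · simpa [hext] using congrFun h (Fin.castLE hr i)
  · refine Function.extend_apply' _ _ _ fun ⟨i, hi⟩ => ?_
    rw [← hi, Fin.val_castLE] at hj
    exact (Nat.lt_succ_iff.1 i.isLt).not_gt hj

end MooreCode

section Degree

open Finsupp

variable (θ : M ≃+* M)

lemma IsMonicAt.le_of_rdvd {g f : ℕ →₀ M} {dg d : ℕ} (hg : IsMonicAt g dg) (hf : rdvd θ g f)
    (hf0 : f ≠ 0) (hfd : ∀ k, d < k → f k = 0) : dg ≤ d := by
  obtain ⟨q, rfl⟩ := hf
  have hq0 : q ≠ 0 := by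
    rintro rfl
    exact hf0 (sMul_zero_left θ g)
  let e := q.support.max' (support_nonempty_iff.2 hq0)
  have hqe : q e ≠ 0 := mem_support_iff.1 (q.support.max'_mem _)
  have hq : ∀ i, e < i → q i = 0 := fun i hi =>
    notMem_support_iff.1 fun h => (q.support.le_max' i h).not_gt hi
  by_contra! hlt
  apply hqe
  simpa [sMul_apply_add θ hq hg.2, hg.1] using hfd (e + dg) (by omega)

lemma IsMonicAt.le_of_rdvd_vecPoly {g : ℕ →₀ M} {n dg d : ℕ} (hg : IsMonicAt g dg)
    {c : Fin n → M} (hc : rdvd θ g (vecPoly c)) (hc0 : c ≠ 0)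
    (hcd : ∀ j : Fin n, d < j → c j = 0) : dg ≤ d := by
  refine hg.le_of_rdvd θ hc (fun h => hc0 (funext fun j => ?_)) fun k hk => ?_
  · simpa [vecPoly_apply] using DFunLike.congr_fun h (j : ℕ)
  · rw [vecPoly_apply]
    split_ifs with hkn
    exacts [hcd _ hk, rfl]

lemma IsMonicAt.le_add_one_of_forall_le_hWt {g : ℕ →₀ M} {n dg d : ℕ} (hg : IsMonicAt g dg)
    (hdg : dg < n) (hd : ∀ c : Fin n → M, rdvd θ g (vecPoly c) → c ≠ 0 → d ≤ hWt c) :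
    d ≤ dg + 1 := by
  have hvec : vecPoly (fun i : Fin n => g i) = g := vecPoly_restrict fun k hk => hg.2 k (by omega)
  have hg_code : rdvd θ g (vecPoly fun i : Fin n => g i) := by
    rw [hvec]
    exact rdvd_refl θ g
  refine (hd _ hg_code fun h => ?_).trans (hWt_le_of_forall_le fun j hj => hg.2 j hj)
  simpa [hg.1] using congrFun h ⟨dg, hdg⟩

end Degree

open Matrix Finsupp in
theorem skew_rs_code_is_mds_general {M : Type*} [Field M] (θ : M ≃+* M) (n : ℕ)
    (hord : orderOf θ = n)
    (α : M) (hα : NormalBasis θ n α) (β : M) (hβ : β = α⁻¹ * θ α)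
    (δ t : ℕ) (hδ : 2 ≤ δ) (hδn : δ ≤ n - 1) (hgcd : Nat.gcd t n = 1)
    (g : ℕ →₀ M) (hgM : IsMonic g)
    (hggen : lIdeal θ g = ⋂ i ∈ Finset.range (δ - 1), lIdeal θ (Xsub ((θ ^ (i * t)) β))) :
    rdvd θ g (XnSubOne n) ∧
    IsMonicAt g (δ - 1) ∧
    (∀ D : Submodule M (Fin n → M),
      (D : Set (Fin n → M)) = {c | rdvd θ g (vecPoly c)} →
        Module.finrank M D = n - δ + 1) ∧
    (∀ c : Fin n → M, rdvd θ g (vecPoly c) → c ≠ 0 → δ ≤ hWt c) ∧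
    (∃ c : Fin n → M, rdvd θ g (vecPoly c) ∧ c ≠ 0 ∧ hWt c = δ) := by
  obtain ⟨dg, hg⟩ := hgM
  have hα0 : α ≠ 0 := by simpa using hα.1.ne_zero ⟨0, by omega⟩
  have hchar : ∀ f, rdvd θ g f ↔
      ∀ j < δ - 1, linearCombination M (fun i => ((θ ^ t) ^ j) ((θ ^ i) α)) f = 0 := by
    intro f
    simp only [rdvd, hggen, Set.mem_iInter, Finset.mem_range, hβ, pow_apply_inv_mul_self]
    refine forall₂_congr fun j _ => ?_
    rw [mem_lIdeal_Xsub_inv_mul_self_iff θ ((map_ne_zero _).2 hα0)]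
    simp only [pow_apply_comm θ _ (j * t)]
    rw [pow_mul']
  set H := mooreMatrix (θ ^ t) (δ - 1) fun i : Fin n => (θ ^ (i : ℕ)) α
  have hcode : ∀ c, rdvd θ g (vecPoly c) ↔ H *ᵥ c = 0 := by
    intro c
    rw [hchar, funext_iff, Fin.forall_iff]
    simp only [linearCombination_vecPoly, mooreMatrix_mulVec_apply, H, Pi.zero_apply]
  have hH : ∀ c, H *ᵥ c = 0 → hWt c ≤ δ - 1 → c = 0 := by
    have hv := hα.1
    rw [← fixedSubfield_pow_of_coprime θ (hord ▸ hgcd : t.Coprime (orderOf θ))] at hv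
    exact fun c => hv.eq_zero_of_mooreMatrix_mulVec
  have hdist : ∀ c, rdvd θ g (vecPoly c) → c ≠ 0 → δ ≤ hWt c := fun c hc hc0 => by
    by_contra!
    exact hc0 (hH c ((hcode c).1 hc) (by omega))
  obtain ⟨c, hc0, hc, hcsupp⟩ := exists_mulVec_eq_zero_of_lt H (by omega : δ - 1 < n)
  have hc : rdvd θ g (vecPoly c) := (hcode c).2 hc
  have hcwt : hWt c = δ :=
    le_antisymm (hWt_le_of_forall_le fun j hj => hcsupp j (by omega)) (hdist c hc hc0)
  have hdg_le : dg ≤ δ - 1 := hg.le_of_rdvd_vecPoly θ hc hc0 hcsupp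
  have hdg : dg = δ - 1 := by
    have := hg.le_add_one_of_forall_le_hWt θ (by omega) hdist
    omega
  refine ⟨(hchar _).2 fun j _ => ?_, hdg ▸ hg, fun D hD => ?_, hdist, c, hc, hc0, hcwt⟩
  · rw [XnSubOne, map_sub, linearCombination_single, linearCombination_single, ← hord,
      pow_orderOf_eq_one]
    simp
  · have hDker : D = LinearMap.ker H.mulVecLin := SetLike.ext' (hD.trans (Set.ext hcode))
    rw [hDker, finrank_ker_mulVecLin H (by omega) hH]
    omega

/-- Setting: `θ` an automorphism of `M` of finite order `n` with
`K = M^θ`, `α` generating a normal basis of `M/K` and `β = α⁻¹θ(α)`. Let `2 ≤ δ ≤ n - 1` and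
`t > 0` with `gcd(t, n) = 1`, and let `g = lclm(x - θ^{it}(β) : 0 ≤ i ≤ δ-2)` in `S = M[x;θ]`.
Then `g` right-divides `xⁿ - 1`, `deg g = δ - 1` (with `g` monic), and the `M`-linear code
`D ⊆ Mⁿ` of coefficient vectors of polynomials of degree `< n` right-divisible by `g` has
dimension `n - δ + 1` and minimum Hamming distance exactly `δ`; in particular `D` is MDS. -/
theorem skew_rs_code_is_mds {M : Type*} [Field M] (θ : M ≃+* M) (n : ℕ) (hn : 0 < n)
    (hord : orderOf θ = n)
    (α : M) (hα : NormalBasis θ n α) (β : M) (hβ : β = α⁻¹ * θ α)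
    (δ t : ℕ) (hδ : 2 ≤ δ) (hδn : δ ≤ n - 1) (ht : 0 < t) (hgcd : Nat.gcd t n = 1)
    (g : ℕ →₀ M) (hgM : IsMonic g)
    (hggen : lIdeal θ g = ⋂ i ∈ Finset.range (δ - 1), lIdeal θ (Xsub ((θ ^ (i * t)) β))) :
    rdvd θ g (XnSubOne n) ∧
    IsMonicAt g (δ - 1) ∧
    (∀ D : Submodule M (Fin n → M),
      (D : Set (Fin n → M)) = {c | rdvd θ g (vecPoly c)} →
        Module.finrank M D = n - δ + 1) ∧
    (∀ c : Fin n → M, rdvd θ g (vecPoly c) → c ≠ 0 → δ ≤ hWt c) ∧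
    (∃ c : Fin n → M, rdvd θ g (vecPoly c) ∧ c ≠ 0 ∧ hWt c = δ) :=
  skew_rs_code_is_mds_general θ n hord α hα β hβ δ t hδ hδn hgcd g hgM hggen
end
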